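/- The poset [2] × [5] has a subposet that can be contracted onto a poset of type D̃₄: specifically, the subposet obtained by removing the elements (1,1) and (2,5) admits a surjective order-preserving map with connected fibers onto the 5-element poset {a₁, a₂, d, b₁, b₂} with a₁ < d, a₂ < d, d < b₁, d < b₂ and no other strict relations. -/

import Mathlib

open Function

/-- The comparability graph of a poset. -/
def compGraph (P : Type*) [PartialOrder P] : SimpleGraph P where
  Adj x y := x ≠ y ∧ (x ≤ y ∨ y ≤ x)
  symm := ⟨fun x y h => ⟨h.1.symm, h.2.symm⟩⟩
  loopless := ⟨fun x h => h.1 rfl⟩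

/-- A contraction of posets: a surjective monotone map with connected fibers. -/
def IsContraction {P Q : Type*} [PartialOrder P] [PartialOrder Q] (c : P → Q) : Prop :=
  Monotone c ∧ Function.Surjective c ∧
    ∀ q : Q, ((compGraph P).induce (c ⁻¹' {q})).Connected

/-- An elementary contraction: exactly one fiber has two elements, all others are singletons. -/
def IsElementaryContraction {P Q : Type*} [PartialOrder P] [PartialOrder Q] (c : P → Q) : Prop :=
  IsContraction c ∧
    ∃ x : Q, (c ⁻¹' {x}).ncard = 2 ∧ ∀ r : Q, r ≠ x → (c ⁻¹' {r}).ncard = 1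

/-- The `D̃₄`-poset: a middle element `d`, two incomparable elements `a₁, a₂` below it and two
incomparable elements `b₁, b₂` above it. -/
inductive DtildeFour : Type
  | a1 | a2 | d | b1 | b2
deriving DecidableEq

instance instFintypeDtildeFour : Fintype DtildeFour where
  elems := {.a1, .a2, .d, .b1, .b2}
  complete := by intro x; cases x <;> decide

/-- The rank of an element of the `D̃₄`-poset. -/
def DtildeFour.rank : DtildeFour → ℕ
  | .a1 => 0 | .a2 => 0 | .d => 1 | .b1 => 2 | .b2 => 2

instance : PartialOrder DtildeFour where
  le x y := x = y ∨ x.rank < y.rank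
  le_refl := by exact (by decide : ∀ a : DtildeFour, a = a ∨ a.rank < a.rank)
  le_trans := by exact (by decide : ∀ a b c : DtildeFour,
    (a = b ∨ a.rank < b.rank) → (b = c ∨ b.rank < c.rank) → (a = c ∨ a.rank < c.rank))
  le_antisymm := by exact (by decide : ∀ a b : DtildeFour,
    (a = b ∨ a.rank < b.rank) → (b = a ∨ b.rank < a.rank) → a = b)

/-!
Send `(0,1) ↦ a₁`, `(1,0) ↦ a₂`, `(0,4) ↦ b₁`, `(1,3) ↦ b₂` and the four middle elements
`(0,2), (0,3), (1,1), (1,2)` to `d`. Removing `(0,0)` and `(1,4)` makes `(0,1), (1,0)` minimal and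
`(0,4), (1,3)` maximal, so this map is monotone. The fibre over `d` is connected by the zigzag
`(0,3) ≥ (0,2) ≤ (1,2) ≥ (1,1)`: every point of it is within two comparabilities of `(0,2)`.
-/

open Relation

theorem compGraph_induce_reachable_of_symmGen {P : Type*} [PartialOrder P] {s : Set P} {x y : s}
    (h : SymmGen (· ≤ ·) (x : P) y) : ((compGraph P).induce s).Reachable x y := by
  by_cases hxy : x = y
  · exact hxy ▸ .refl x
  · exact SimpleGraph.Adj.reachable ⟨Subtype.coe_injective.ne hxy, h⟩

theorem isContraction_of_section {P Q : Type*} [PartialOrder P] [PartialOrder Q] {c : P → Q}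
    (hc : Monotone c) (σ : Q → P) (hσ : ∀ q, c (σ q) = q)
    (hnear : ∀ x, ∃ y, c y = c x ∧ SymmGen (· ≤ ·) (σ (c x)) y ∧ SymmGen (· ≤ ·) y x) :
    IsContraction c := by
  refine ⟨hc, fun q => ⟨σ q, hσ q⟩, fun q => ?_⟩
  refine (SimpleGraph.connected_iff_exists_forall_reachable _).2 ⟨⟨σ q, hσ q⟩, ?_⟩
  rintro ⟨x, rfl : c x = q⟩
  obtain ⟨y, hy, hσy, hyx⟩ := hnear x
  exact (compGraph_induce_reachable_of_symmGen (y := ⟨y, hy⟩) hσy).trans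
    (compGraph_induce_reachable_of_symmGen hyx)

abbrev TwoFiveMinusEnds := {x : Fin 2 × Fin 5 // x ≠ (0, 0) ∧ x ≠ (1, 4)}

namespace DtildeFour

instance : DecidableRel (α := DtildeFour) (· ≤ ·) := fun a b =>
  decidable_of_iff (a = b ∨ a.rank < b.rank) Iff.rfl

def contraction (x : TwoFiveMinusEnds) : DtildeFour :=
  if x.1 = (0, 1) then a1
  else if x.1 = (1, 0) then a2
  else if x.1 = (0, 4) then b1
  else if x.1 = (1, 3) then b2
  else d

def contractionSection : DtildeFour → TwoFiveMinusEnds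
  | a1 => ⟨(0, 1), by decide⟩
  | a2 => ⟨(1, 0), by decide⟩
  | d => ⟨(0, 2), by decide⟩
  | b1 => ⟨(0, 4), by decide⟩
  | b2 => ⟨(1, 3), by decide⟩

theorem contraction_monotone : Monotone contraction := by
  unfold Monotone; decide

theorem contraction_contractionSection (q : DtildeFour) :
    contraction (contractionSection q) = q := by
  cases q <;> decide

theorem exists_zigzag_to_contractionSection (x : TwoFiveMinusEnds) :
    ∃ y, contraction y = contraction x ∧
      SymmGen (· ≤ ·) (contractionSection (contraction x)) y ∧ SymmGen (· ≤ ·) y x := by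
  revert x; decide

end DtildeFour

/-- The subposet of `[2] × [5]` obtained by removing the minimum `(1,1)` and the maximum
`(2,5)` admits a contraction onto the `D̃₄`-poset. -/
theorem two_times_five_minus_ends_contracts_onto_DtildeFour :
    ∃ c : {x : Fin 2 × Fin 5 // x ≠ (0, 0) ∧ x ≠ (1, 4)} → DtildeFour,
      IsContraction c :=
  ⟨DtildeFour.contraction, isContraction_of_section DtildeFour.contraction_monotone
    DtildeFour.contractionSection DtildeFour.contraction_contractionSection
    DtildeFour.exists_zigzag_to_contractionSection⟩
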